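/- arXiv:1403.7805 — 4 statements merged into one kernel-verified Lean document; each statement's English description precedes it below -/
import Mathlib

section
/- Let G be a group with a Λ-valued length function L such that c(g,h) ∈ Λ for all g, h ∈ G. On the set T(G) of pairs ⟨n,g⟩ with g ∈ G and n ∈ [0, L(g)]_Λ, modulo the identification ⟨n,g⟩ ~ ⟨n,h⟩ whenever n ≤ c(g,h), the function d(⟨n,g⟩, ⟨m,h⟩) = n + m − 2·min{n, m, c(g,h)} is well-defined and is a Λ-metric. -/
section TofG

variable {Λ : Type*} [AddCommGroup Λ] [LinearOrder Λ] [IsOrderedAddMonoid Λ] {G : Type*} [Group G]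

/-- A point `⟨n, g⟩` of the disjoint union of intervals `[0, L g]_Λ`. -/
def TValid (L : G → Λ) (p : Λ × G) : Prop := 0 ≤ p.1 ∧ p.1 ≤ L p.2

/-- The identification `⟨n, g⟩ ~ ⟨m, h⟩` iff `n = m` and `n ≤ c(g, h)`. -/
def TRel (c : G → G → Λ) (p q : Λ × G) : Prop :=
  p.1 = q.1 ∧ p.1 ≤ c p.2 q.2

/-- The distance `d(⟨n,g⟩, ⟨m,h⟩) = n + m - 2 min {n, m, c(g,h)}`. -/
def TDist (c : G → G → Λ) (p q : Λ × G) : Λ :=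
  p.1 + q.1 - (min p.1 (min q.1 (c p.2 q.2)) + min p.1 (min q.1 (c p.2 q.2)))

end TofG

/-!
Write `d(p, q) = n + m - 2 (p | q)` with the Gromov product `(p | q) = min {n, m, c(g, h)}` of
`p = ⟨n, g⟩` and `q = ⟨m, h⟩`. The function `c` is symmetric because `L (g⁻¹ h) = L (h⁻¹ g)`,
and the ultrametric inequality for `c` passes to the Gromov product. This gives the triangle
inequality, since for `r = ⟨k, f⟩` we have `(p | r) + (r | q) = min + max ≤ (p | q) + k`.
Well-definedness comes from `min {x, c(g, k)} = min {x, c(g', k)}` whenever `x ≤ c(g, g')`.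
-/

lemma gromov_comm_of_length {Λ : Type*} [AddCommGroup Λ] [LinearOrder Λ] [IsOrderedAddMonoid Λ]
    {G : Type*} [Group G] {L : G → Λ} {c : G → G → Λ}
    (hc : ∀ g h, c g h + c g h = L g + L h - L (g⁻¹ * h)) (hinv : ∀ g, L g⁻¹ = L g) (g h : G) :
    c g h = c h g := by
  refine (strictMono_id.add strictMono_id).injective (?_ : c g h + c g h = c h g + c h g)
  rw [hc, hc, ← hinv (h⁻¹ * g), mul_inv_rev, inv_inv, add_comm (L g)]

section GromovProduct

variable {Λ : Type*} [LinearOrder Λ] {G : Type*}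

lemma min_gromov_eq_of_le {c : G → G → Λ} (hcomm : ∀ g h, c g h = c h g)
    (hultra : ∀ g h k, min (c g k) (c h k) ≤ c g h) {x : Λ} {g g' : G} (hx : x ≤ c g g') (h : G) :
    min x (c g h) = min x (c g' h) := by
  have key : ∀ {g g'}, x ≤ c g g' → min x (c g h) ≤ c g' h := fun {g g'} hx =>
    (min_le_min (hx.trans_eq (hcomm g g')) (hcomm g h).le).trans (hultra g' h g)
  exact le_antisymm (le_min (min_le_left _ _) (key hx))
    (le_min (min_le_left _ _) (key (hx.trans_eq (hcomm g g'))))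

def TGromov (c : G → G → Λ) (p q : Λ × G) : Λ := min p.1 (min q.1 (c p.2 q.2))

lemma TGromov_le_left (c : G → G → Λ) (p q : Λ × G) : TGromov c p q ≤ p.1 := min_le_left _ _

lemma TGromov_le_right (c : G → G → Λ) (p q : Λ × G) : TGromov c p q ≤ q.1 :=
  (min_le_right _ _).trans (min_le_left _ _)

lemma TGromov_le_gromov (c : G → G → Λ) (p q : Λ × G) : TGromov c p q ≤ c p.2 q.2 :=
  (min_le_right _ _).trans (min_le_right _ _)

lemma TGromov_comm {c : G → G → Λ} (hcomm : ∀ g h, c g h = c h g) (p q : Λ × G) :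
    TGromov c p q = TGromov c q p := by
  rw [TGromov, TGromov, hcomm, min_left_comm]

lemma TGromov_congr {c : G → G → Λ} (hcomm : ∀ g h, c g h = c h g)
    (hultra : ∀ g h k, min (c g k) (c h k) ≤ c g h) {p p' q q' : Λ × G}
    (hp : TRel c p p') (hq : TRel c q q') : TGromov c p q = TGromov c p' q' := by
  obtain ⟨hpp', hpc⟩ := hp
  obtain ⟨hqq', hqc⟩ := hq
  simp only [TGromov, ← min_assoc, ← hpp', ← hqq']
  rw [min_gromov_eq_of_le hcomm hultra ((min_le_left _ _).trans hpc), hcomm p'.2,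
    min_gromov_eq_of_le hcomm hultra ((min_le_right _ _).trans hqc), hcomm q'.2]

lemma TGromov_ultra {c : G → G → Λ} (hcomm : ∀ g h, c g h = c h g)
    (hultra : ∀ g h k, min (c g k) (c h k) ≤ c g h) (p q r : Λ × G) :
    min (TGromov c p r) (TGromov c r q) ≤ TGromov c p q := by
  refine le_min ((min_le_left _ _).trans (TGromov_le_left c p r))
    (le_min ((min_le_right _ _).trans (TGromov_le_right c r q)) ?_)
  calc min (TGromov c p r) (TGromov c r q)
      ≤ min (c p.2 r.2) (c q.2 r.2) :=
        min_le_min (TGromov_le_gromov c p r) ((TGromov_le_gromov c r q).trans_eq (hcomm _ _))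
    _ ≤ c p.2 q.2 := hultra _ _ _

end GromovProduct

section Metric

variable {Λ : Type*} [AddCommGroup Λ] [LinearOrder Λ] {G : Type*}

lemma TDist_eq (c : G → G → Λ) (p q : Λ × G) :
    TDist c p q = p.1 + q.1 - (TGromov c p q + TGromov c p q) := rfl

lemma TDist_congr {c : G → G → Λ} (hcomm : ∀ g h, c g h = c h g)
    (hultra : ∀ g h k, min (c g k) (c h k) ≤ c g h) {p p' q q' : Λ × G}
    (hp : TRel c p p') (hq : TRel c q q') : TDist c p q = TDist c p' q' := by
  rw [TDist_eq, TDist_eq, TGromov_congr hcomm hultra hp hq, hp.1, hq.1]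

lemma TDist_comm {c : G → G → Λ} (hcomm : ∀ g h, c g h = c h g) (p q : Λ × G) :
    TDist c p q = TDist c q p := by
  rw [TDist_eq, TDist_eq, TGromov_comm hcomm, add_comm p.1]

variable [IsOrderedAddMonoid Λ]

lemma TDist_nonneg (c : G → G → Λ) (p q : Λ × G) : 0 ≤ TDist c p q :=
  sub_nonneg.2 (add_le_add (TGromov_le_left c p q) (TGromov_le_right c p q))

lemma TDist_eq_zero_iff (c : G → G → Λ) (p q : Λ × G) : TDist c p q = 0 ↔ TRel c p q := by
  rw [TDist_eq, sub_eq_zero, eq_comm,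
    add_eq_add_iff_eq_and_eq (TGromov_le_left c p q) (TGromov_le_right c p q)]
  constructor
  · rintro ⟨hp, hq⟩
    exact ⟨hp.symm.trans hq, hp ▸ TGromov_le_gromov c p q⟩
  · rintro ⟨hpq, hpc⟩
    have hp : TGromov c p q = p.1 := by
      rw [TGromov, ← hpq, min_eq_left (le_min le_rfl hpc)]
    exact ⟨hp, hp.trans hpq⟩

lemma TDist_triangle {c : G → G → Λ} (hcomm : ∀ g h, c g h = c h g)
    (hultra : ∀ g h k, min (c g k) (c h k) ≤ c g h) (p q r : Λ × G) :
    TDist c p q ≤ TDist c p r + TDist c r q := by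
  have key : TGromov c p r + TGromov c r q ≤ TGromov c p q + r.1 := by
    rw [← min_add_max]
    exact add_le_add (TGromov_ultra hcomm hultra p q r)
      (max_le (TGromov_le_right c p r) (TGromov_le_left c r q))
  rw [TDist_eq, TDist_eq, TDist_eq]
  set a := TGromov c p q
  set b := TGromov c p r
  set d := TGromov c r q
  calc p.1 + q.1 - (a + a) = p.1 + r.1 + (r.1 + q.1) - (a + r.1 + (a + r.1)) := by abel
    _ ≤ p.1 + r.1 + (r.1 + q.1) - (b + d + (b + d)) := sub_le_sub_left (add_le_add key key) _
    _ = p.1 + r.1 - (b + b) + (r.1 + q.1 - (d + d)) := by abel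

end Metric

theorem stmt_11_general {Λ : Type*} [AddCommGroup Λ] [LinearOrder Λ] [IsOrderedAddMonoid Λ]
    {G : Type*} [Group G] (L : G → Λ) (c : G → G → Λ)
    (hc : ∀ g h, c g h + c g h = L g + L h - L (g⁻¹ * h))
    (h2 : ∀ g : G, L g⁻¹ = L g)
    (h3 : ∀ g h k : G, min (c g k) (c h k) ≤ c g h) :
    (∀ p p' q q' : Λ × G, TValid L p → TValid L p' → TValid L q → TValid L q' →
      TRel c p p' → TRel c q q' → TDist c p q = TDist c p' q') ∧
    (∀ p q : Λ × G, TValid L p → TValid L q → 0 ≤ TDist c p q) ∧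
    (∀ p q : Λ × G, TValid L p → TValid L q → (TDist c p q = 0 ↔ TRel c p q)) ∧
    (∀ p q : Λ × G, TValid L p → TValid L q → TDist c p q = TDist c q p) ∧
    (∀ p q r : Λ × G, TValid L p → TValid L q → TValid L r →
      TDist c p q ≤ TDist c p r + TDist c r q) := by
  have hcomm := gromov_comm_of_length hc h2
  exact ⟨fun _ _ _ _ _ _ _ _ hp hq => TDist_congr hcomm h3 hp hq,
    fun p q _ _ => TDist_nonneg c p q,
    fun p q _ _ => TDist_eq_zero_iff c p q,
    fun p q _ _ => TDist_comm hcomm p q,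
    fun p q r _ _ _ => TDist_triangle hcomm h3 p q r⟩

/-- For a group `G` with `Λ`-valued length function `L` such
that `c(g,h) = (1/2)(L g + L h - L (g⁻¹ h)) ∈ Λ` for all `g, h`, the function
`d(⟨n,g⟩, ⟨m,h⟩) = n + m - 2 min {n, m, c(g,h)}` on the set of pairs `⟨n,g⟩`
with `n ∈ [0, L g]_Λ` is well defined modulo the identification
`⟨n,g⟩ ~ ⟨n,h⟩` for `n ≤ c(g,h)`, and is a `Λ`-metric on the quotient. -/
theorem stmt_11 {Λ : Type*} [AddCommGroup Λ] [LinearOrder Λ] [IsOrderedAddMonoid Λ]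
    {G : Type*} [Group G] (L : G → Λ) (c : G → G → Λ)
    (hc : ∀ g h, c g h + c g h = L g + L h - L (g⁻¹ * h))
    (h1 : ∀ g, L g = 0 ↔ g = 1)
    (h2 : ∀ g : G, L g⁻¹ = L g)
    (h3 : ∀ g h k : G, min (c g k) (c h k) ≤ c g h) :
    (∀ p p' q q' : Λ × G, TValid L p → TValid L p' → TValid L q → TValid L q' →
      TRel c p p' → TRel c q q' → TDist c p q = TDist c p' q') ∧
    (∀ p q : Λ × G, TValid L p → TValid L q → 0 ≤ TDist c p q) ∧
    (∀ p q : Λ × G, TValid L p → TValid L q → (TDist c p q = 0 ↔ TRel c p q)) ∧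
    (∀ p q : Λ × G, TValid L p → TValid L q → TDist c p q = TDist c q p) ∧
    (∀ p q r : Λ × G, TValid L p → TValid L q → TValid L r →
      TDist c p q ≤ TDist c p r + TDist c r q) :=
  stmt_11_general L c hc h2 h3
end

section
/- Let G be a group with Λ-valued length function L with c(g,h) ∈ Λ for all g,h, and let T(G) be the associated Λ-tree of pairs ⟨n,g⟩ (n ∈ [0,L(g)]) modulo ⟨n,g⟩ = ⟨n,h⟩ when n ≤ c(g,h), with metric d(⟨n,g⟩,⟨m,h⟩) = n + m − 2·min{n,m,c(g,h)}. Then the map g ↦ ⟨L(g), g⟩ is an isometric embedding of G (with metric d(g,h) = L(g^{-1}h)) into T(G). -/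
/-!
Doubling the Gromov product, `c g h + c g h = L g + L h - L (g⁻¹ * h)`, gives `c g g = L g`,
`c g 1 = 0` and symmetry of `c`; the inequality `min (c g k) (c h k) ≤ c g h` with `k = h` or
`k = 1` then gives `c g h ≤ min (L g) (L h)` and `0 ≤ L g`. So the minimum in the distance between
`⟨L g, g⟩` and `⟨L h, h⟩` is `c g h`, and the distance collapses to `L (g⁻¹ * h)`.
An identification `⟨L g, g⟩ ~ ⟨L h, h⟩` forces `c g h = L g = L h`, hence `L (g⁻¹ * h) = 0`.
Since `Λ` need not be divisible, each identity for `c` is proved for its double and halved using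
injectivity of `x ↦ x + x`.
-/

lemma add_self_injective {Λ : Type*} [AddCommMonoid Λ] [LinearOrder Λ]
    [IsOrderedCancelAddMonoid Λ] :
    Function.Injective fun x : Λ => x + x :=
  StrictMono.injective fun _ _ h => add_lt_add h h

section GromovProduct

variable {Λ : Type*} [AddCommGroup Λ] [LinearOrder Λ] [IsOrderedAddMonoid Λ]
  {G : Type*} [Group G] {L : G → Λ} {c : G → G → Λ}

lemma gromovProduct_self (hc : ∀ g h, c g h + c g h = L g + L h - L (g⁻¹ * h)) (hL : L 1 = 0)
    (g : G) : c g g = L g :=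
  add_self_injective <| by simp only [hc, inv_mul_cancel, hL, sub_zero]

lemma gromovProduct_one_right (hc : ∀ g h, c g h + c g h = L g + L h - L (g⁻¹ * h))
    (hL : L 1 = 0) (hinv : ∀ g, L g⁻¹ = L g) (g : G) : c g 1 = 0 :=
  add_self_injective <| by simp only [hc, hL, mul_one, hinv, add_zero, sub_self]

lemma gromovProduct_comm (hc : ∀ g h, c g h + c g h = L g + L h - L (g⁻¹ * h))
    (hinv : ∀ g, L g⁻¹ = L g) (g h : G) : c g h = c h g :=
  add_self_injective <| by
    simp only [hc]
    rw [← hinv (g⁻¹ * h), mul_inv_rev, inv_inv, add_comm (L g)]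

lemma gromovProduct_le_length (hc : ∀ g h, c g h + c g h = L g + L h - L (g⁻¹ * h))
    (hL : L 1 = 0) (hultra : ∀ g h k, min (c g k) (c h k) ≤ c g h) (g h : G) : c g h ≤ L g := by
  simpa only [min_self, gromovProduct_self hc hL] using hultra g g h

lemma length_nonneg (hc : ∀ g h, c g h + c g h = L g + L h - L (g⁻¹ * h)) (hL : L 1 = 0)
    (hinv : ∀ g, L g⁻¹ = L g) (hultra : ∀ g h k, min (c g k) (c h k) ≤ c g h) (g : G) :
    0 ≤ L g := by
  simpa only [min_self, gromovProduct_one_right hc hL hinv, gromovProduct_self hc hL]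
    using hultra g g 1

lemma tDist_eq_length_inv_mul (hc : ∀ g h, c g h + c g h = L g + L h - L (g⁻¹ * h))
    (hL : L 1 = 0) (hinv : ∀ g, L g⁻¹ = L g) (hultra : ∀ g h k, min (c g k) (c h k) ≤ c g h)
    (g h : G) : TDist c (L g, g) (L h, h) = L (g⁻¹ * h) := by
  have hle_right : c g h ≤ L h :=
    gromovProduct_comm hc hinv g h ▸ gromovProduct_le_length hc hL hultra h g
  have hmin : min (L g) (min (L h) (c g h)) = c g h := by
    rw [min_eq_right hle_right, min_eq_right (gromovProduct_le_length hc hL hultra g h)]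
  simp only [TDist, hmin, hc, sub_sub_cancel]

lemma eq_of_tRel (hc : ∀ g h, c g h + c g h = L g + L h - L (g⁻¹ * h))
    (hL : ∀ g, L g = 0 ↔ g = 1) (hultra : ∀ g h k, min (c g k) (c h k) ≤ c g h) {g h : G}
    (hrel : TRel c (L g, g) (L h, h)) : g = h := by
  obtain ⟨hlen, hle⟩ : L g = L h ∧ L g ≤ c g h := hrel
  have hc_eq : c g h = L g :=
    le_antisymm (gromovProduct_le_length hc ((hL 1).2 rfl) hultra g h) hle
  have hzero : L (g⁻¹ * h) = 0 := by
    have := hc g h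
    rw [hc_eq, ← hlen] at this
    exact sub_eq_self.mp this.symm
  exact inv_mul_eq_one.mp ((hL _).mp hzero)

end GromovProduct

/-- For a group `G` with `Λ`-valued length function `L` (with
`c(g,h) ∈ Λ` for all `g, h`) and `T(G)` the associated `Λ`-tree with metric
`d(⟨n,g⟩, ⟨m,h⟩) = n + m - 2 min {n, m, c(g,h)}`, the map `g ↦ ⟨L g, g⟩`
is an isometric embedding of `(G, d(g,h) = L (g⁻¹ h))` into `T(G)`:
the points `⟨L g, g⟩` lie in `T(G)` and their distances equal `L (g⁻¹ h)`. -/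
theorem stmt_12 {Λ : Type*} [AddCommGroup Λ] [LinearOrder Λ] [IsOrderedAddMonoid Λ]
    {G : Type*} [Group G] (L : G → Λ) (c : G → G → Λ)
    (hc : ∀ g h, c g h + c g h = L g + L h - L (g⁻¹ * h))
    (h1 : ∀ g, L g = 0 ↔ g = 1)
    (h2 : ∀ g : G, L g⁻¹ = L g)
    (h3 : ∀ g h k : G, min (c g k) (c h k) ≤ c g h) :
    (∀ g : G, TValid L (L g, g)) ∧
    (∀ g h : G, TDist c (L g, g) (L h, h) = L (g⁻¹ * h)) ∧
    (∀ g h : G, TRel c (L g, g) (L h, h) → g = h) := by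
  have hL1 : L 1 = 0 := (h1 1).2 rfl
  exact ⟨fun g => ⟨length_nonneg hc hL1 h2 h3 g, le_rfl⟩, tDist_eq_length_inv_mul hc hL1 h2 h3,
    fun _ _ => eq_of_tRel hc h1 h3⟩
end

section
/- Let G be a group with Λ-valued length function L (with c(g,h) ∈ Λ for all g,h) and let T(G) be the associated space with metric d(⟨n,g⟩,⟨m,h⟩) = n + m − 2·min{n,m,c(g,h)}. The action of h ∈ G defined by h·⟨n,g⟩ = ⟨L(h) − n, h⟩ when n ≤ c(g, h^{-1}) and h·⟨n,g⟩ = ⟨L(h) + n − 2c(g,h^{-1}), hg⟩ when n ≥ c(g, h^{-1}) is a well-defined bijective isometry of T(G), and this gives a group action of G on T(G) by isometries. -/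
/-!
A point `⟨n, g⟩` of `T(G)` is determined, up to the identification, by its distances to the
vertices `⟨L k, k⟩`: the distance to `⟨0, 1⟩` is `n`, and `⟨n, h⟩` is at distance `L g - n`
from `⟨L g, g⟩` exactly when `n ≤ c(g, h)`. The map of `h` sends the vertex of `k` to that of
`h k`, so once it is known to be an isometry, `d(h • p, k) = d(p, h⁻¹ k)` for every vertex `k`;
well-definedness, bijectivity and the action axioms then reduce to identities in `G`. The
isometry itself is a case analysis on the branch of the definition taken by each point, using
that any three Gromov products `c(g, h), c(g, k), c(h, k)` form an isosceles triple (the two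
smallest agree).
-/
section TofG

variable {Λ : Type*} [AddCommGroup Λ] [LinearOrder Λ] [IsOrderedAddMonoid Λ] {G : Type*} [Group G]

open Classical in
/-- The action of `h ∈ G` on `T(G)`:
`h · ⟨n,g⟩ = ⟨L h - n, h⟩` when `n ≤ c(g, h⁻¹)` and
`h · ⟨n,g⟩ = ⟨L h + n - 2 c(g, h⁻¹), h g⟩` when `n ≥ c(g, h⁻¹)`. -/
noncomputable def TAct (L : G → Λ) (c : G → G → Λ) (h : G) (p : Λ × G) :
    Λ × G :=
  if p.1 ≤ c p.2 h⁻¹ then (L h - p.1, h)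
  else (L h + p.1 - (c p.2 h⁻¹ + c p.2 h⁻¹), h * p.2)

end TofG

/-- `c` is the Gromov product of the length function `L`; it is passed as data, with `2 c(g,h)`
written `c g h + c g h`, because `Λ` need not be divisible by two. -/
structure IsLengthFunction {Λ : Type*} [AddCommGroup Λ] [LinearOrder Λ] [IsOrderedAddMonoid Λ]
    {G : Type*} [Group G] (L : G → Λ) (c : G → G → Λ) : Prop where
  gromov_add_self : ∀ g h, c g h + c g h = L g + L h - L (g⁻¹ * h)
  length_one : L 1 = 0
  length_inv : ∀ g, L g⁻¹ = L g
  min_le_gromov : ∀ g h k, min (c g k) (c h k) ≤ c g h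

def vertex {Λ : Type*} {G : Type*} (L : G → Λ) (k : G) : Λ × G := (L k, k)

section

variable {Λ : Type*} [AddCommGroup Λ] [LinearOrder Λ] {G : Type*} [Group G]
  {L : G → Λ} {c : G → G → Λ}

theorem tAct_of_le {h : G} {p : Λ × G} (hp : p.1 ≤ c p.2 h⁻¹) : TAct L c h p = (L h - p.1, h) :=
  if_pos hp

theorem tAct_of_lt {h : G} {p : Λ × G} (hp : c p.2 h⁻¹ < p.1) :
    TAct L c h p = (L h + p.1 - (c p.2 h⁻¹ + c p.2 h⁻¹), h * p.2) :=
  if_neg hp.not_ge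

end

namespace IsLengthFunction

variable {Λ : Type*} [AddCommGroup Λ] [LinearOrder Λ] [IsOrderedAddMonoid Λ] {G : Type*} [Group G]
  {L : G → Λ} {c : G → G → Λ}

theorem gromov_comm (hL : IsLengthFunction L c) (g h : G) : c g h = c h g := by
  have := hL.gromov_add_self g h
  have := hL.gromov_add_self h g
  rw [← hL.length_inv (h⁻¹ * g), mul_inv_rev, inv_inv] at this
  grind

theorem gromov_self (hL : IsLengthFunction L c) (g : G) : c g g = L g := by
  have := hL.gromov_add_self g g
  rw [inv_mul_cancel, hL.length_one] at this
  grind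

theorem gromov_one_right (hL : IsLengthFunction L c) (g : G) : c g 1 = 0 := by
  have := hL.gromov_add_self g 1
  rw [mul_one, hL.length_inv, hL.length_one] at this
  grind

theorem gromov_nonneg (hL : IsLengthFunction L c) (g h : G) : 0 ≤ c g h := by
  simpa [hL.gromov_one_right] using hL.min_le_gromov g h 1

theorem gromov_le_length_left (hL : IsLengthFunction L c) (g h : G) : c g h ≤ L g := by
  have key := hL.gromov_add_self g⁻¹ (g⁻¹ * h)
  rw [hL.length_inv, inv_inv, mul_inv_cancel_left] at key
  have := hL.gromov_nonneg g⁻¹ (g⁻¹ * h)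
  have := hL.gromov_add_self g h
  grind

theorem gromov_le_length_right (hL : IsLengthFunction L c) (g h : G) : c g h ≤ L h :=
  hL.gromov_comm g h ▸ hL.gromov_le_length_left h g

theorem length_nonneg (hL : IsLengthFunction L c) (g : G) : 0 ≤ L g :=
  hL.gromov_self g ▸ hL.gromov_nonneg g g

theorem gromov_mul_left (hL : IsLengthFunction L c) (h g₁ g₂ : G) :
    c (h * g₁) (h * g₂) + c g₁ h⁻¹ + c g₂ h⁻¹ = L h + c g₁ g₂ := by
  have e₁ := hL.gromov_add_self (h * g₁) (h * g₂)
  have e₂ := hL.gromov_add_self g₁ g₂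
  have e₃ := hL.gromov_add_self g₁ h⁻¹
  have e₄ := hL.gromov_add_self g₂ h⁻¹
  rw [mul_inv_rev, mul_assoc, inv_mul_cancel_left] at e₁
  rw [← mul_inv_rev, hL.length_inv, hL.length_inv] at e₃ e₄
  grind

theorem length_mul (hL : IsLengthFunction L c) (h g : G) :
    L (h * g) + c g h⁻¹ + c g h⁻¹ = L h + L g := by
  simpa [hL.gromov_self] using hL.gromov_mul_left h g g

theorem gromov_mul_self_right (hL : IsLengthFunction L c) (h g : G) :
    c h (h * g) + c g h⁻¹ = L h := by
  simpa [hL.gromov_one_right, hL.gromov_comm 1] using hL.gromov_mul_left h 1 g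

theorem min_le_gromov_left (hL : IsLengthFunction L c) (g h k : G) :
    min (c g h) (c h k) ≤ c g k := by
  simpa [hL.gromov_comm h] using hL.min_le_gromov g k h

theorem min_le_gromov_right (hL : IsLengthFunction L c) (g h k : G) :
    min (c g h) (c g k) ≤ c h k := by
  simpa [hL.gromov_comm g] using hL.min_le_gromov h k g

theorem tValid_tAct (hL : IsLengthFunction L c) (h : G) {p : Λ × G} (hp : TValid L p) :
    TValid L (TAct L c h p) := by
  obtain ⟨n, g⟩ := p
  obtain ⟨hn₀, hn⟩ := hp
  have := hL.gromov_le_length_right g h⁻¹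
  rw [hL.length_inv] at this
  rcases le_or_gt n (c g h⁻¹) with hle | hlt
  · rw [tAct_of_le hle]
    constructor <;> dsimp only <;> grind
  · rw [tAct_of_lt hlt]
    have := hL.length_mul h g
    constructor <;> dsimp only <;> grind

theorem tDist_comm (hL : IsLengthFunction L c) (p q : Λ × G) : TDist c p q = TDist c q p := by
  simp only [TDist, hL.gromov_comm p.2]
  grind

theorem tDist_congr_right (hL : IsLengthFunction L c) (p : Λ × G) {q q' : Λ × G}
    (hq : TRel c q q') : TDist c p q = TDist c p q' := by
  obtain ⟨hq₁, hq₂⟩ := hq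
  have hqq' := hL.min_le_gromov_left p.2 q.2 q'.2
  have hq'q := hL.min_le_gromov_left p.2 q'.2 q.2
  rw [hL.gromov_comm q'.2] at hq'q
  have : min q.1 (c p.2 q.2) = min q.1 (c p.2 q'.2) := by
    apply le_antisymm <;> refine le_min (min_le_left _ _) ?_
    · exact (le_min (min_le_right _ _) ((min_le_left _ _).trans hq₂)).trans hqq'
    · exact (le_min (min_le_right _ _) ((min_le_left _ _).trans hq₂)).trans hq'q
  simp only [TDist, ← hq₁, this]

theorem tDist_vertex_one (hL : IsLengthFunction L c) {p : Λ × G} (hp : TValid L p) :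
    TDist c p (vertex L 1) = p.1 := by
  have := hL.gromov_one_right p.2
  simp only [TDist, vertex, hL.length_one]
  grind [TValid]

theorem tRel_iff_forall_tDist_vertex (hL : IsLengthFunction L c) {p q : Λ × G} (hp : TValid L p)
    (hq : TValid L q) : TRel c p q ↔ ∀ k, TDist c p (vertex L k) = TDist c q (vertex L k) := by
  refine ⟨fun hpq k => ?_, fun h => ?_⟩
  · rw [hL.tDist_comm, hL.tDist_congr_right _ hpq, hL.tDist_comm]
  · have h₁ := h 1
    rw [hL.tDist_vertex_one hp, hL.tDist_vertex_one hq] at h₁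
    have h₂ := h p.2
    have := hL.gromov_le_length_right q.2 p.2
    have := hL.gromov_comm q.2 p.2
    simp only [TDist, vertex, hL.gromov_self] at h₂
    refine ⟨h₁, ?_⟩
    grind [TValid]

theorem tRel_tAct_vertex (hL : IsLengthFunction L c) (h k : G) :
    TRel c (TAct L c h (vertex L k)) (vertex L (h * k)) := by
  have := hL.length_mul h k
  have := hL.gromov_mul_self_right h k
  have := hL.gromov_le_length_left k h⁻¹
  rcases le_or_gt (L k) (c k h⁻¹) with hle | hlt
  · rw [tAct_of_le hle]
    simp only [TRel, vertex]
    grind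
  · rw [tAct_of_lt hlt]
    simp only [TRel, vertex, hL.gromov_self]
    grind

theorem tDist_tAct_of_le_of_lt (hL : IsLengthFunction L c) (h : G) {p q : Λ × G}
    (hp : p.1 ≤ c p.2 h⁻¹) (hq : c q.2 h⁻¹ < q.1) :
    TDist c (TAct L c h p) (TAct L c h q) = TDist c p q := by
  have := hL.gromov_mul_self_right h q.2
  have := hL.min_le_gromov p.2 q.2 h⁻¹
  have := hL.min_le_gromov_left p.2 q.2 h⁻¹
  have := hL.min_le_gromov_right p.2 q.2 h⁻¹
  rw [tAct_of_le hp, tAct_of_lt hq]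
  simp only [TDist]
  grind

theorem tDist_tAct (hL : IsLengthFunction L c) (h : G) {p q : Λ × G} (hq₀ : 0 ≤ q.1) :
    TDist c (TAct L c h p) (TAct L c h q) = TDist c p q := by
  rcases le_or_gt p.1 (c p.2 h⁻¹) with hp | hp <;> rcases le_or_gt q.1 (c q.2 h⁻¹) with hq | hq
  · have := hL.min_le_gromov p.2 q.2 h⁻¹
    rw [tAct_of_le hp, tAct_of_le hq]
    simp only [TDist, hL.gromov_self]
    grind
  · exact hL.tDist_tAct_of_le_of_lt h hp hq
  · rw [hL.tDist_comm, hL.tDist_tAct_of_le_of_lt h hq hp, hL.tDist_comm]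
  · have := hL.gromov_mul_left h p.2 q.2
    have := hL.min_le_gromov p.2 q.2 h⁻¹
    have := hL.min_le_gromov_left p.2 q.2 h⁻¹
    have := hL.min_le_gromov_right p.2 q.2 h⁻¹
    rw [tAct_of_lt hp, tAct_of_lt hq]
    simp only [TDist]
    grind

theorem tDist_tAct_vertex (hL : IsLengthFunction L c) (h k : G) (p : Λ × G) :
    TDist c (TAct L c h p) (vertex L k) = TDist c p (vertex L (h⁻¹ * k)) := by
  have hk := hL.tRel_tAct_vertex h (h⁻¹ * k)
  rw [mul_inv_cancel_left] at hk
  rw [← hL.tDist_congr_right _ hk, hL.tDist_tAct h (hL.length_nonneg _)]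

theorem tRel_tAct_of_tRel (hL : IsLengthFunction L c) (h : G) {p q : Λ × G} (hp : TValid L p)
    (hq : TValid L q) (hpq : TRel c p q) : TRel c (TAct L c h p) (TAct L c h q) := by
  refine (hL.tRel_iff_forall_tDist_vertex (hL.tValid_tAct h hp) (hL.tValid_tAct h hq)).2
    fun k => ?_
  rw [hL.tDist_tAct_vertex, hL.tDist_tAct_vertex, (hL.tRel_iff_forall_tDist_vertex hp hq).1 hpq]

theorem tRel_of_tRel_tAct (hL : IsLengthFunction L c) (h : G) {p q : Λ × G} (hp : TValid L p)
    (hq : TValid L q) (hpq : TRel c (TAct L c h p) (TAct L c h q)) : TRel c p q := by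
  refine (hL.tRel_iff_forall_tDist_vertex hp hq).2 fun k => ?_
  simpa only [hL.tDist_tAct_vertex, inv_mul_cancel_left] using
    (hL.tRel_iff_forall_tDist_vertex (hL.tValid_tAct h hp) (hL.tValid_tAct h hq)).1 hpq (h * k)

theorem exists_tRel_tAct (hL : IsLengthFunction L c) (h : G) {q : Λ × G} (hq : TValid L q) :
    ∃ p, TValid L p ∧ TRel c (TAct L c h p) q := by
  refine ⟨TAct L c h⁻¹ q, hL.tValid_tAct _ hq, ?_⟩
  refine (hL.tRel_iff_forall_tDist_vertex (hL.tValid_tAct h (hL.tValid_tAct _ hq)) hq).2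
    fun k => ?_
  rw [hL.tDist_tAct_vertex, hL.tDist_tAct_vertex, inv_inv, mul_inv_cancel_left]

theorem tRel_tAct_one (hL : IsLengthFunction L c) {p : Λ × G} (hp : TValid L p) :
    TRel c (TAct L c 1 p) p :=
  (hL.tRel_iff_forall_tDist_vertex (hL.tValid_tAct 1 hp) hp).2 fun k => by
    rw [hL.tDist_tAct_vertex, inv_one, one_mul]

theorem tRel_tAct_mul (hL : IsLengthFunction L c) (g h : G) {p : Λ × G} (hp : TValid L p) :
    TRel c (TAct L c (g * h) p) (TAct L c g (TAct L c h p)) := by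
  refine (hL.tRel_iff_forall_tDist_vertex (hL.tValid_tAct _ hp)
    (hL.tValid_tAct g (hL.tValid_tAct h hp))).2 fun k => ?_
  rw [hL.tDist_tAct_vertex, hL.tDist_tAct_vertex, hL.tDist_tAct_vertex, mul_inv_rev, mul_assoc]

end IsLengthFunction

/-- For a group `G` with `Λ`-valued length function `L` (with
`c(g,h) ∈ Λ`), the map `h · ⟨n,g⟩` defined above is a well-defined bijective
isometry of `T(G)` (well defined and bijective modulo the identification
`TRel`), and this defines an action of `G` on `T(G)` by isometries. -/
theorem stmt_13 {Λ : Type*} [AddCommGroup Λ] [LinearOrder Λ] [IsOrderedAddMonoid Λ]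
    {G : Type*} [Group G] (L : G → Λ) (c : G → G → Λ)
    (hc : ∀ g h, c g h + c g h = L g + L h - L (g⁻¹ * h))
    (h1 : ∀ g, L g = 0 ↔ g = 1)
    (h2 : ∀ g : G, L g⁻¹ = L g)
    (h3 : ∀ g h k : G, min (c g k) (c h k) ≤ c g h) :
    -- sends points of T(G) to points of T(G)
    (∀ (h : G) (p : Λ × G), TValid L p → TValid L (TAct L c h p)) ∧
    -- well defined modulo the identification
    (∀ (h : G) (p q : Λ × G), TValid L p → TValid L q → TRel c p q →
      TRel c (TAct L c h p) (TAct L c h q)) ∧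
    -- isometry
    (∀ (h : G) (p q : Λ × G), TValid L p → TValid L q →
      TDist c (TAct L c h p) (TAct L c h q) = TDist c p q) ∧
    -- surjective modulo the identification
    (∀ (h : G) (q : Λ × G), TValid L q →
      ∃ p : Λ × G, TValid L p ∧ TRel c (TAct L c h p) q) ∧
    -- injective modulo the identification
    (∀ (h : G) (p q : Λ × G), TValid L p → TValid L q →
      TRel c (TAct L c h p) (TAct L c h q) → TRel c p q) ∧
    -- the identity acts trivially
    (∀ p : Λ × G, TValid L p → TRel c (TAct L c 1 p) p) ∧
    -- compatibility with multiplication: a group action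
    (∀ (g h : G) (p : Λ × G), TValid L p →
      TRel c (TAct L c (g * h) p) (TAct L c g (TAct L c h p))) := by
  have hL : IsLengthFunction L c := ⟨hc, (h1 1).2 rfl, h2, h3⟩
  exact ⟨fun h _ hp => hL.tValid_tAct h hp, fun h _ _ => hL.tRel_tAct_of_tRel h,
    fun h _ _ _ hq => hL.tDist_tAct h hq.1, fun h _ => hL.exists_tRel_tAct h,
    fun h _ _ => hL.tRel_of_tRel_tAct h, fun _ => hL.tRel_tAct_one,
    fun g h _ => hL.tRel_tAct_mul g h⟩
end

section
/- In the big free group BF(o) on a well-ordered infinite alphabet with at least two generators, with the ℤ^o-metric d(w,v) = L(w^{-1}v) (lexicographic order on ℤ^o), BF(o) is not ℤ^o-geodesic: letting a be the first generator and ι the empty word, there is no isometry α from the ℤ^o-interval [0, L(a)] to BF(o) with α(0) = ι and α(L(a)) = a. Concretely, there is no word w with d(ι,w) = (1,−1,0,0,…). -/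
/-- The big free group `BF(o)` on a well-ordered infinite
alphabet `A` (here abstracted as a group `B` of reduced transfinite words,
whose length function `L : B → ℤ^A` records the — necessarily nonnegative —
number of occurrences of each letter and its inverse, with `L` of the first
generator `a` being the corresponding unit vector and `L` vanishing only at
the empty word, and `d w v = L (w⁻¹ v)`), with `ℤ^A` ordered
lexicographically, is not `ℤ^A`-geodesic: there is no isometry `α` from the
interval `[0, L a]` to `B` with `α 0 = ι` and `α (L a) = a`.  Concretely,
there is no word `w` with `d ι w = (1, -1, 0, 0, …)`. -/
theorem stmt_16 {A : Type*} [LinearOrder A] [WellFoundedLT A] [Infinite A]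
    {B : Type*} [Group B]
    (L : B → A → ℤ)
    -- letter counts are nonnegative
    (hpos : ∀ w a, 0 ≤ L w a)
    -- only the empty word has length zero
    (hzero : ∀ w : B, L w = 0 ↔ w = 1)
    -- lengths are symmetric and subadditive (d w v = L (w⁻¹ v) is a metric)
    (hinv : ∀ w : B, L w⁻¹ = L w)
    (hsub : ∀ w v : B, ∀ i, L (w * v) i ≤ L w i + L v i)
    (le : (A → ℤ) → (A → ℤ) → Prop)
    (hle : ∀ s t, le s t ↔ s = t ∨ ∃ i, s i < t i ∧ ∀ j < i, s j = t j)
    -- `a` is the first generator: its length is the unit vector at the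
    -- least element `a₀` of the alphabet
    (a : B) (a₀ : A) (ha₀ : ∀ b : A, a₀ ≤ b)
    (hLa : L a = fun b => if b = a₀ then 1 else 0)
    -- `a₁` is a second letter
    (a₁ : A) (ha₁ : a₀ < a₁) :
    -- no word at distance (1, -1, 0, 0, …) from the empty word ι = 1
    (¬ ∃ w : B, L ((1 : B)⁻¹ * w) =
        fun b => if b = a₀ then 1 else if b = a₁ then -1 else 0) ∧
    -- hence no geodesic from ι to a: no isometry of the interval [0, L a]
    ¬ ∃ α : (A → ℤ) → B,
        α 0 = 1 ∧ α (L a) = a ∧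
        ∀ s t : A → ℤ, le 0 s → le s (L a) → le 0 t → le t (L a) →
          le s t → L ((α s)⁻¹ * α t) = t - s := by
  set t : A → ℤ := fun b => if b = a₀ then 1 else if b = a₁ then -1 else 0 with ht
  have hno : ¬ ∃ w : B, L ((1 : B)⁻¹ * w) = t := by
    rintro ⟨w, hw⟩
    have h1 := hpos ((1 : B)⁻¹ * w) a₁
    rw [hw] at h1
    rw [ht] at h1
    simp [ne_of_gt ha₁] at h1
  refine ⟨hno, ?_⟩
  rintro ⟨α, h0, ha, hiso⟩
  have h00 : le 0 0 := (hle 0 0).2 (Or.inl rfl)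
  have h0t : le 0 t := by
    refine (hle 0 t).2 (Or.inr ⟨a₀, ?_, ?_⟩)
    · simp [ht]
    · intro j hj; exact absurd (ha₀ j) (not_le.2 hj)
  have h0a : le 0 (L a) := by
    refine (hle 0 (L a)).2 (Or.inr ⟨a₀, ?_, ?_⟩)
    · simp [hLa]
    · intro j hj; exact absurd (ha₀ j) (not_le.2 hj)
  have hta : le t (L a) := by
    refine (hle t (L a)).2 (Or.inr ⟨a₁, ?_, ?_⟩)
    · simp [ht, hLa, if_neg (ne_of_gt ha₁)]
    · intro j hj
      by_cases hj0 : j = a₀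
      · simp [ht, hLa, hj0]
      · simp [ht, hLa, hj0, ne_of_lt hj]
  have := hiso 0 t h00 h0a h0t hta h0t
  rw [h0] at this
  exact hno ⟨α t, by simpa using this⟩
end
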